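/- Let n ≥ 1 and let E, F ⊂ ℝⁿ be disjoint measurable sets with L_{s₀}(E,F) < ∞ for some s₀ ∈ (0,1/2). If both 𝓛ⁿ(E) < ∞ and 𝓛ⁿ(F) < ∞, then lim_{s→0⁺} s · L_s(E,F) = 0. -/

import Mathlib

open MeasureTheory Real Filter Topology Set
open scoped ENNReal

/-- The classical heat kernel on `ℝⁿ`. -/
noncomputable def heatKernel (n : ℕ) (t : ℝ) (x y : EuclideanSpace ℝ (Fin n)) : ℝ :=
  (4 * π * t) ^ (-(n : ℝ) / 2) * Real.exp (-‖x - y‖ ^ 2 / (4 * t))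

/-- `L_s(A,B) = ∫₀^∞ t^{-(1+s)} ∫_A ∫_B p_t(x,y) dy dx dt`. -/
noncomputable def Lfun (n : ℕ) (s : ℝ) (A B : Set (EuclideanSpace ℝ (Fin n))) : ℝ≥0∞ :=
  ∫⁻ t in Set.Ioi (0:ℝ), ENNReal.ofReal (t ^ (-(1 + s))) *
    ∫⁻ x in A, ∫⁻ y in B, ENNReal.ofReal (heatKernel n t x y)

/-!
For `0 < s ≤ s₀` split `L_s(E,F)` at `t = 1`. On `(0,1]` the weight `t^{-(1+s)}` is dominated
by `t^{-(1+s₀)}`, so that part is at most `L_{s₀}(E,F)`. On `(1,∞)` the kernel is at most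
`(4πt)^{-n/2}`, so the inner double integral is at most `(4πt)^{-n/2} |E| |F|`, and since `n ≥ 1`
the whole integrand is at most a constant times the integrable function `t^{-3/2}`.
Hence `L_s(E,F)` is bounded uniformly in `s ∈ (0,s₀]`, and `s · L_s(E,F) → 0`.
-/

noncomputable def heatInteraction (n : ℕ) (t : ℝ) (A B : Set (EuclideanSpace ℝ (Fin n))) :
    ℝ≥0∞ :=
  ∫⁻ x in A, ∫⁻ y in B, ENNReal.ofReal (heatKernel n t x y)

section

variable {n : ℕ}

lemma Lfun_eq_lintegral_heatInteraction (s : ℝ) (A B : Set (EuclideanSpace ℝ (Fin n))) :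
    Lfun n s A B =
      ∫⁻ t in Ioi (0:ℝ), ENNReal.ofReal (t ^ (-(1 + s))) * heatInteraction n t A B :=
  rfl

lemma heatKernel_le_rpow {t : ℝ} (ht : 0 < t) (x y : EuclideanSpace ℝ (Fin n)) :
    heatKernel n t x y ≤ (4 * π * t) ^ (-(n : ℝ) / 2) := by
  have hexp : Real.exp (-‖x - y‖ ^ 2 / (4 * t)) ≤ 1 :=
    Real.exp_le_one_iff.2 (div_nonpos_of_nonpos_of_nonneg (by simp) (by positivity))
  exact mul_le_of_le_one_right (by positivity) hexp

lemma heatInteraction_le {t : ℝ} (ht : 0 < t) (A B : Set (EuclideanSpace ℝ (Fin n))) :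
    heatInteraction n t A B ≤
      ENNReal.ofReal ((4 * π * t) ^ (-(n : ℝ) / 2)) * volume B * volume A := by
  calc heatInteraction n t A B
      ≤ ∫⁻ _ in A, ∫⁻ _ in B, ENNReal.ofReal ((4 * π * t) ^ (-(n : ℝ) / 2)) :=
        lintegral_mono fun x => lintegral_mono fun y =>
          ENNReal.ofReal_le_ofReal (heatKernel_le_rpow ht x y)
    _ = ENNReal.ofReal ((4 * π * t) ^ (-(n : ℝ) / 2)) * volume B * volume A := by
        rw [setLIntegral_const, setLIntegral_const]

lemma rpow_neg_one_add_mul_rpow_le (hn : 1 ≤ n) {t s : ℝ} (ht : 1 ≤ t) (hs : 0 ≤ s) :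
    t ^ (-(1 + s)) * (4 * π * t) ^ (-(n : ℝ) / 2) ≤
      (4 * π) ^ (-(n : ℝ) / 2) * t ^ (-(3 / 2) : ℝ) := by
  have ht₀ : 0 < t := one_pos.trans_le ht
  have hn' : (1 : ℝ) ≤ n := by exact_mod_cast hn
  calc t ^ (-(1 + s)) * (4 * π * t) ^ (-(n : ℝ) / 2)
      = (4 * π) ^ (-(n : ℝ) / 2) * t ^ (-(1 + s) + -(n : ℝ) / 2) := by
        rw [Real.mul_rpow (by positivity) ht₀.le, Real.rpow_add ht₀]; ring
    _ ≤ (4 * π) ^ (-(n : ℝ) / 2) * t ^ (-(3 / 2) : ℝ) := by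
        gcongr
        linarith

lemma lintegral_Ioc_zero_one_le_Lfun {s s₀ : ℝ} (hs : s ≤ s₀)
    (A B : Set (EuclideanSpace ℝ (Fin n))) :
    ∫⁻ t in Ioc (0:ℝ) 1, ENNReal.ofReal (t ^ (-(1 + s))) * heatInteraction n t A B ≤
      Lfun n s₀ A B := by
  refine (setLIntegral_mono' measurableSet_Ioc fun t ht => ?_).trans
    (lintegral_mono_set Ioc_subset_Ioi_self)
  gcongr ENNReal.ofReal ?_ * _
  exact Real.rpow_le_rpow_of_exponent_ge ht.1 ht.2 (by linarith)

lemma lintegral_Ioi_one_le (hn : 1 ≤ n) {s : ℝ} (hs : 0 ≤ s)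
    (A B : Set (EuclideanSpace ℝ (Fin n))) :
    ∫⁻ t in Ioi (1:ℝ), ENNReal.ofReal (t ^ (-(1 + s))) * heatInteraction n t A B ≤
      ∫⁻ t in Ioi (1:ℝ), ENNReal.ofReal ((4 * π) ^ (-(n : ℝ) / 2) * t ^ (-(3 / 2) : ℝ)) *
        (volume B * volume A) := by
  refine setLIntegral_mono' measurableSet_Ioi fun t (ht : 1 < t) => ?_
  have ht₀ : 0 < t := one_pos.trans ht
  calc ENNReal.ofReal (t ^ (-(1 + s))) * heatInteraction n t A B
      ≤ ENNReal.ofReal (t ^ (-(1 + s))) *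
          (ENNReal.ofReal ((4 * π * t) ^ (-(n : ℝ) / 2)) * volume B * volume A) := by
        gcongr
        exact heatInteraction_le ht₀ A B
    _ = ENNReal.ofReal (t ^ (-(1 + s)) * (4 * π * t) ^ (-(n : ℝ) / 2)) *
          (volume B * volume A) := by
        rw [ENNReal.ofReal_mul (by positivity)]; ring
    _ ≤ _ := by
        gcongr ENNReal.ofReal ?_ * _
        exact rpow_neg_one_add_mul_rpow_le hn ht.le hs

lemma lintegral_Ioi_one_rpow_mul_lt_top {c : ℝ} {C : ℝ≥0∞} (hC : C ≠ ⊤) :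
    ∫⁻ t in Ioi (1:ℝ), ENNReal.ofReal (c * t ^ (-(3 / 2) : ℝ)) * C < ⊤ := by
  rw [lintegral_mul_const' _ _ hC]
  refine ENNReal.mul_lt_top ?_ hC.lt_top
  exact IntegrableOn.setLIntegral_lt_top
    ((integrableOn_Ioi_rpow_of_lt (a := -(3 / 2)) (by norm_num) one_pos).const_mul c)

lemma Lfun_le_add (hn : 1 ≤ n) {s s₀ : ℝ} (hs : 0 ≤ s) (hss₀ : s ≤ s₀)
    (A B : Set (EuclideanSpace ℝ (Fin n))) :
    Lfun n s A B ≤ Lfun n s₀ A B +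
      ∫⁻ t in Ioi (1:ℝ), ENNReal.ofReal ((4 * π) ^ (-(n : ℝ) / 2) * t ^ (-(3 / 2) : ℝ)) *
        (volume B * volume A) := by
  rw [Lfun_eq_lintegral_heatInteraction, ← Ioc_union_Ioi_eq_Ioi zero_le_one,
    lintegral_union measurableSet_Ioi (Ioc_disjoint_Ioi le_rfl)]
  exact add_le_add (lintegral_Ioc_zero_one_le_Lfun hss₀ A B) (lintegral_Ioi_one_le hn hs A B)

lemma exists_Lfun_le_of_mem_Ioc (hn : 1 ≤ n) {s₀ : ℝ} (A B : Set (EuclideanSpace ℝ (Fin n)))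
    (hfin : Lfun n s₀ A B < ⊤) (hA : volume A < ⊤) (hB : volume B < ⊤) :
    ∃ M : ℝ≥0∞, M ≠ ⊤ ∧ ∀ s ∈ Ioc (0:ℝ) s₀, Lfun n s A B ≤ M :=
  ⟨_, ENNReal.add_ne_top.2 ⟨hfin.ne,
      (lintegral_Ioi_one_rpow_mul_lt_top (ENNReal.mul_ne_top hB.ne hA.ne)).ne⟩,
    fun _ hs => Lfun_le_add hn hs.1.le hs.2 A B⟩

end

lemma tendsto_ofReal_mul_nhdsGT_zero_of_le {f : ℝ → ℝ≥0∞} {M : ℝ≥0∞} (hM : M ≠ ⊤)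
    (hf : ∀ᶠ s in 𝓝[>] (0:ℝ), f s ≤ M) :
    Tendsto (fun s => ENNReal.ofReal s * f s) (𝓝[>] 0) (𝓝 0) := by
  have hofReal : Tendsto ENNReal.ofReal (𝓝[>] (0:ℝ)) (𝓝 0) := by
    simpa using (ENNReal.continuous_ofReal.tendsto 0).mono_left nhdsWithin_le_nhds
  have hbound : Tendsto (fun s => ENNReal.ofReal s * M) (𝓝[>] 0) (𝓝 0) := by
    simpa using ENNReal.Tendsto.mul_const hofReal (Or.inr hM)
  refine tendsto_of_tendsto_of_tendsto_of_le_of_le' tendsto_const_nhds hbound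
    (Eventually.of_forall fun _ => zero_le) ?_
  filter_upwards [hf] with s hs using mul_le_mul_right hs _

theorem statement11_general (n : ℕ) (hn : 1 ≤ n) (E F : Set (EuclideanSpace ℝ (Fin n)))
    (s₀ : ℝ) (hs₀ : s₀ ∈ Set.Ioo (0:ℝ) (1/2)) (hfin : Lfun n s₀ E F < ⊤)
    (hμE : volume E < ⊤) (hμF : volume F < ⊤) :
    Tendsto (fun s : ℝ => ENNReal.ofReal s * Lfun n s E F) (𝓝[>] (0:ℝ)) (𝓝 0) := by
  obtain ⟨M, hM, hbound⟩ := exists_Lfun_le_of_mem_Ioc hn E F hfin hμE hμF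
  refine tendsto_ofReal_mul_nhdsGT_zero_of_le hM ?_
  filter_upwards [Ioc_mem_nhdsGT hs₀.1] with s hs using hbound s hs

/-- if `E, F` are disjoint measurable sets with `L_{s₀}(E,F) < ∞` for some
`s₀ ∈ (0,1/2)` and both have finite Lebesgue measure, then `lim_{s→0⁺} s L_s(E,F) = 0`. -/
theorem statement11 (n : ℕ) (hn : 1 ≤ n) (E F : Set (EuclideanSpace ℝ (Fin n)))
    (hE : MeasurableSet E) (hF : MeasurableSet F) (hEF : Disjoint E F)
    (s₀ : ℝ) (hs₀ : s₀ ∈ Set.Ioo (0:ℝ) (1/2)) (hfin : Lfun n s₀ E F < ⊤)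
    (hμE : volume E < ⊤) (hμF : volume F < ⊤) :
    Tendsto (fun s : ℝ => ENNReal.ofReal s * Lfun n s E F) (𝓝[>] (0:ℝ)) (𝓝 0) :=
  statement11_general n hn E F s₀ hs₀ hfin hμE hμF
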